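/- Let N be a normal subgroup of G. Under the bijection [γ] ↦ [ρ_γ] between H^1(N, Der) and equivalence classes of lifts of ρ|_N to k[ε] (given by ρ_γ(n)(x₀+εx₁) = ρ(n)(x₀) + ε(ρ(n)(x₁) + γ_n(ρ(n)(x₀)))), the action of g ∈ G on classes of lifts given by (g_*ρ_γ)(n) = r_g ∘ ρ_γ(g^{-1}ng) ∘ r_g^{-1} (r_g any lift of ρ(g)) corresponds to the standard action on group cohomology: g_*[ρ_γ] = [ρ_{γ^{(g)}}] where γ^{(g)}_n = g·γ_{g^{-1}ng}. Moreover, restricting a lift of ρ to the subgroup N corresponds under these bijections to the restriction map H^1(G, Der) → H^1(N, Der) on cocycles. -/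

import Mathlib

/-!
Conjugating by the trivial lift `T_g : x₀ + εx₁ ↦ ρ(g)(x₀) + ε ρ(g)(x₁)` turns `ρ_γ(g⁻¹sg)`
into `ρ_{γ'}(s)`, because `γ'_s = ρ(g) ∘ γ_{g⁻¹sg} ∘ ρ(g)⁻¹`. An arbitrary lift `r` of `ρ(g)`
differs from `T_g` by `χ = r T_g⁻¹`, which reduces to the identity, so `r ρ_γ(g⁻¹ · g) r⁻¹` and
`ρ_{γ'}` are conjugate by `χ`.
-/

open PowerSeries

/-- coefficientwise inclusion `k[[t]] → k[ε][[t]]`. -/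
noncomputable def inclEps (k : Type) [Field k] :
    PowerSeries k →+* PowerSeries (DualNumber k) :=
  PowerSeries.map (algebraMap k (DualNumber k))

/-- coefficientwise reduction `k[ε][[t]] → k[[t]]` modulo `(ε)`. -/
noncomputable def redEps (k : Type) [Field k] :
    PowerSeries (DualNumber k) →+* PowerSeries k :=
  PowerSeries.map (TrivSqZeroExt.fstHom k k k).toRingHom

/-- the constant power series `ε ∈ k[ε][[t]]`. -/
noncomputable def epsC (k : Type) [Field k] : PowerSeries (DualNumber k) :=
  PowerSeries.C (DualNumber.eps : DualNumber k)

/-- `P s`, for `s` in the subgroup `N`, is given by the twisting formula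
`ρ_γ(s)(x₀ + εx₁) = ρ(s)(x₀) + ε(ρ(s)(x₁) + γ_s(ρ(s)(x₀)))`. -/
def IsTwistLiftOn {k : Type} [Field k] {G : Type} [Group G] (N : Subgroup G)
    (ρ : G →* (PowerSeries k ≃ₐ[k] PowerSeries k))
    (γ : G → Derivation k (PowerSeries k) (PowerSeries k))
    (P : G → (PowerSeries (DualNumber k) ≃ₐ[DualNumber k] PowerSeries (DualNumber k))) :
    Prop :=
  ∀ s ∈ N, ∀ (x₀ x₁ : PowerSeries k),
    P s (inclEps k x₀ + epsC k * inclEps k x₁) =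
      inclEps k (ρ s x₀) + epsC k * inclEps k (ρ s x₁ + γ s (ρ s x₀))

section DualNumberPowerSeries

variable {k : Type} [Field k]

variable (k) in
noncomputable def sndEps : PowerSeries (DualNumber k) →+ PowerSeries k where
  toFun f := PowerSeries.mk fun n => (coeff n f).snd
  map_zero' := by ext n; simp
  map_add' f g := by ext n; simp

lemma redEps_inclEps (x : PowerSeries k) : redEps k (inclEps k x) = x := by
  ext n; simp [redEps, inclEps, coeff_map]

lemma sndEps_inclEps (x : PowerSeries k) : sndEps k (inclEps k x) = 0 := by
  ext n; simp [sndEps, inclEps, coeff_map, TrivSqZeroExt.algebraMap_eq_inl]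

lemma redEps_epsC_mul (f : PowerSeries (DualNumber k)) : redEps k (epsC k * f) = 0 := by
  ext n; simp [redEps, epsC]

lemma eps_mul_inl (a : k) :
    (DualNumber.eps * TrivSqZeroExt.inl a : DualNumber k) = TrivSqZeroExt.inr a := by
  rw [mul_comm, DualNumber.eps, TrivSqZeroExt.inl_mul_inr, smul_eq_mul, mul_one]

lemma sndEps_epsC_mul_inclEps (x : PowerSeries k) : sndEps k (epsC k * inclEps k x) = x := by
  ext n
  simp [sndEps, epsC, coeff_C_mul, inclEps, coeff_map, TrivSqZeroExt.algebraMap_eq_inl,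
    eps_mul_inl]

lemma inclEps_redEps_add_epsC_mul_sndEps (f : PowerSeries (DualNumber k)) :
    inclEps k (redEps k f) + epsC k * inclEps k (sndEps k f) = f := by
  ext n <;>
  simp [epsC, inclEps, redEps, sndEps, coeff_map, coeff_C_mul,
    TrivSqZeroExt.algebraMap_eq_inl, eps_mul_inl]

lemma exists_eq_inclEps_add_epsC_mul (f : PowerSeries (DualNumber k)) :
    ∃ a b : PowerSeries k, f = inclEps k a + epsC k * inclEps k b :=
  ⟨_, _, (inclEps_redEps_add_epsC_mul_sndEps f).symm⟩

lemma epsC_mul_epsC : epsC k * epsC k = 0 := by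
  rw [epsC, ← map_mul, DualNumber.eps_mul_eps, map_zero]

lemma inclEps_add_epsC_mul_mul (a b c d : PowerSeries k) :
    (inclEps k a + epsC k * inclEps k b) * (inclEps k c + epsC k * inclEps k d) =
      inclEps k (a * c) + epsC k * inclEps k (a * d + b * c) := by
  rw [map_mul, map_add, map_mul, map_mul]
  linear_combination (inclEps k b * inclEps k d) * epsC_mul_epsC (k := k)

lemma C_eq_inclEps_add_epsC_mul (z : DualNumber k) :
    C z = inclEps k (C z.fst) + epsC k * inclEps k (C z.snd) := by
  simp only [inclEps, map_C, TrivSqZeroExt.algebraMap_eq_inl, epsC, ← map_mul, eps_mul_inl,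
    ← map_add, TrivSqZeroExt.inl_fst_add_inr_snd_eq]

end DualNumberPowerSeries

section TrivialLift

variable {k : Type} [Field k]

noncomputable def trivialLiftFun (σ : PowerSeries k ≃ₐ[k] PowerSeries k)
    (f : PowerSeries (DualNumber k)) : PowerSeries (DualNumber k) :=
  inclEps k (σ (redEps k f)) + epsC k * inclEps k (σ (sndEps k f))

lemma trivialLiftFun_apply (σ : PowerSeries k ≃ₐ[k] PowerSeries k) (a b : PowerSeries k) :
    trivialLiftFun σ (inclEps k a + epsC k * inclEps k b) =
      inclEps k (σ a) + epsC k * inclEps k (σ b) := by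
  simp [trivialLiftFun, redEps_inclEps, redEps_epsC_mul, sndEps_inclEps,
    sndEps_epsC_mul_inclEps]

lemma trivialLiftFun_symm_apply (σ : PowerSeries k ≃ₐ[k] PowerSeries k)
    (f : PowerSeries (DualNumber k)) : trivialLiftFun σ.symm (trivialLiftFun σ f) = f := by
  obtain ⟨a, b, rfl⟩ := exists_eq_inclEps_add_epsC_mul f
  simp only [trivialLiftFun_apply, AlgEquiv.symm_apply_apply]

noncomputable def trivialLift (σ : PowerSeries k ≃ₐ[k] PowerSeries k) :
    PowerSeries (DualNumber k) ≃ₐ[DualNumber k] PowerSeries (DualNumber k) where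
  toFun := trivialLiftFun σ
  invFun := trivialLiftFun σ.symm
  left_inv := trivialLiftFun_symm_apply σ
  right_inv f := by simpa using trivialLiftFun_symm_apply σ.symm f
  map_add' f g := by
    simp only [trivialLiftFun, map_add]
    ring
  map_mul' f g := by
    obtain ⟨a, b, rfl⟩ := exists_eq_inclEps_add_epsC_mul f
    obtain ⟨c, d, rfl⟩ := exists_eq_inclEps_add_epsC_mul g
    rw [inclEps_add_epsC_mul_mul, trivialLiftFun_apply, trivialLiftFun_apply,
      trivialLiftFun_apply, inclEps_add_epsC_mul_mul, map_mul, map_add, map_mul, map_mul, map_mul]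
  commutes' z := by
    have hσ (a : k) : σ (C a) = C a := by rw [C_eq_algebraMap, σ.commutes]
    change trivialLiftFun σ (C z) = C z
    rw [C_eq_inclEps_add_epsC_mul, trivialLiftFun_apply, hσ, hσ]

lemma trivialLift_apply (σ : PowerSeries k ≃ₐ[k] PowerSeries k) (a b : PowerSeries k) :
    trivialLift σ (inclEps k a + epsC k * inclEps k b) =
      inclEps k (σ a) + epsC k * inclEps k (σ b) :=
  trivialLiftFun_apply σ a b

lemma redEps_trivialLift_symm (σ : PowerSeries k ≃ₐ[k] PowerSeries k)
    (f : PowerSeries (DualNumber k)) : redEps k ((trivialLift σ).symm f) = σ.symm (redEps k f) := by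
  change redEps k (trivialLiftFun σ.symm f) = _
  simp [trivialLiftFun, redEps_inclEps, redEps_epsC_mul]

end TrivialLift

section TwistLift

variable {k : Type} [Field k] {G : Type} [Group G] {N : Subgroup G}
  {ρ : G →* (PowerSeries k ≃ₐ[k] PowerSeries k)}
  {γ γ' : G → Derivation k (PowerSeries k) (PowerSeries k)}
  {P P' : G → (PowerSeries (DualNumber k) ≃ₐ[DualNumber k] PowerSeries (DualNumber k))}

lemma trivialLift_mul_eq_mul_trivialLift (hP : IsTwistLiftOn N ρ γ P)
    (hP' : IsTwistLiftOn N ρ γ' P') {g s : G} (hs : s ∈ N) (hs' : g⁻¹ * s * g ∈ N)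
    (hγ' : ∀ x, γ' s x = ρ g (γ (g⁻¹ * s * g) (ρ g⁻¹ x))) :
    trivialLift (ρ g) * P (g⁻¹ * s * g) = P' s * trivialLift (ρ g) := by
  have hconj : ρ g * ρ (g⁻¹ * s * g) = ρ s * ρ g := by
    rw [← map_mul, ← map_mul, mul_assoc, mul_inv_cancel_left]
  have hconj' : ρ g⁻¹ * (ρ s * ρ g) = ρ (g⁻¹ * s * g) := by rw [← map_mul, ← map_mul, mul_assoc]
  ext1 y
  obtain ⟨a, b, rfl⟩ := exists_eq_inclEps_add_epsC_mul y
  rw [AlgEquiv.mul_apply, AlgEquiv.mul_apply, hP _ hs', trivialLift_apply, trivialLift_apply,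
    hP' s hs, hγ', map_add]
  simp only [← AlgEquiv.mul_apply, hconj, hconj']

end TwistLift

theorem statement5_general
    (k : Type) [Field k]
    (G : Type) [Group G]
    (ρ : G →* (PowerSeries k ≃ₐ[k] PowerSeries k))
    (N : Subgroup G) (hN : N.Normal) :
    -- the action corresponds to the standard action on cohomology
    (∀ (γ γ' : G → Derivation k (PowerSeries k) (PowerSeries k))
       (P P' : G → (PowerSeries (DualNumber k) ≃ₐ[DualNumber k] PowerSeries (DualNumber k)))
       (g : G) (r : PowerSeries (DualNumber k) ≃ₐ[DualNumber k] PowerSeries (DualNumber k)),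
      -- `γ` is a 1-cocycle on `N` and `P = ρ_γ`
      (∀ s ∈ N, ∀ t ∈ N, ∀ x, γ (s * t) x = γ s x + ρ s (γ t (ρ s⁻¹ x))) →
      IsTwistLiftOn N ρ γ P →
      -- `γ'` is the twisted cocycle `s ↦ g·γ_{g⁻¹sg}` and `P' = ρ_{γ'}`
      (∀ s ∈ N, ∀ x, γ' s x = ρ g (γ (g⁻¹ * s * g) (ρ g⁻¹ x))) →
      IsTwistLiftOn N ρ γ' P' →
      -- `r` is a lift of `ρ(g)` to `k[ε]`
      (∀ x, redEps k (r x) = ρ g (redEps k x)) →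
      -- then `g_*ρ_γ` is equivalent to `ρ_{γ'}`
      ∃ χ : PowerSeries (DualNumber k) ≃ₐ[DualNumber k] PowerSeries (DualNumber k),
        (∀ x, redEps k (χ x) = redEps k x) ∧
        ∀ s ∈ N, ∀ x, r (P (g⁻¹ * s * g) (r⁻¹ x)) = χ (P' s (χ⁻¹ x))) ∧
    -- restricting lifts corresponds to restricting cocycles
    (∀ (γ : G → Derivation k (PowerSeries k) (PowerSeries k))
       (P : G → (PowerSeries (DualNumber k) ≃ₐ[DualNumber k] PowerSeries (DualNumber k))),
      (∀ (g : G) (x₀ x₁ : PowerSeries k),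
        P g (inclEps k x₀ + epsC k * inclEps k x₁) =
          inclEps k (ρ g x₀) + epsC k * inclEps k (ρ g x₁ + γ g (ρ g x₀))) →
      IsTwistLiftOn N ρ γ P) := by
  refine ⟨fun γ γ' P P' g r _ hP hγ' hP' hr => ?_, fun γ P hP s _ => hP s⟩
  refine ⟨r * (trivialLift (ρ g))⁻¹, fun x => ?_, fun s hs x => ?_⟩
  · rw [AlgEquiv.mul_apply, hr, AlgEquiv.aut_inv, redEps_trivialLift_symm,
      AlgEquiv.apply_symm_apply]
  · have hs' : g⁻¹ * s * g ∈ N := by simpa using hN.conj_mem s hs g⁻¹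
    have hT := trivialLift_mul_eq_mul_trivialLift hP hP' hs hs' (hγ' s hs)
    suffices r * P (g⁻¹ * s * g) * r⁻¹ = r * (trivialLift (ρ g))⁻¹ * P' s *
        (r * (trivialLift (ρ g))⁻¹)⁻¹ from DFunLike.congr_fun this x
    rw [eq_mul_inv_of_mul_eq hT.symm]
    group

/-- Under the correspondence `[γ] ↦ [ρ_γ]` between `H¹(N, Der)` and
classes of lifts of `ρ|_N` to `k[ε]`, the action `(g_*ρ_γ)(n) = r_g ρ_γ(g⁻¹ng) r_g⁻¹`
corresponds to the standard cohomological action `g_*[γ] = [n ↦ g·γ_{g⁻¹ng}]`;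
moreover restriction of lifts from `G` to `N` corresponds to the restriction of
cocycles. -/
theorem statement5
    (p : ℕ) [Fact p.Prime]
    (k : Type) [Field k] [CharP k p] [PerfectField k]
    (G : Type) [Group G] [Finite G]
    (ρ : G →* (PowerSeries k ≃ₐ[k] PowerSeries k)) (hρ : Function.Injective ρ)
    (N : Subgroup G) (hN : N.Normal) :
    -- the action corresponds to the standard action on cohomology
    (∀ (γ γ' : G → Derivation k (PowerSeries k) (PowerSeries k))
       (P P' : G → (PowerSeries (DualNumber k) ≃ₐ[DualNumber k] PowerSeries (DualNumber k)))
       (g : G) (r : PowerSeries (DualNumber k) ≃ₐ[DualNumber k] PowerSeries (DualNumber k)),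
      -- `γ` is a 1-cocycle on `N` and `P = ρ_γ`
      (∀ s ∈ N, ∀ t ∈ N, ∀ x, γ (s * t) x = γ s x + ρ s (γ t (ρ s⁻¹ x))) →
      IsTwistLiftOn N ρ γ P →
      -- `γ'` is the twisted cocycle `s ↦ g·γ_{g⁻¹sg}` and `P' = ρ_{γ'}`
      (∀ s ∈ N, ∀ x, γ' s x = ρ g (γ (g⁻¹ * s * g) (ρ g⁻¹ x))) →
      IsTwistLiftOn N ρ γ' P' →
      -- `r` is a lift of `ρ(g)` to `k[ε]`
      (∀ x, redEps k (r x) = ρ g (redEps k x)) →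
      -- then `g_*ρ_γ` is equivalent to `ρ_{γ'}`
      ∃ χ : PowerSeries (DualNumber k) ≃ₐ[DualNumber k] PowerSeries (DualNumber k),
        (∀ x, redEps k (χ x) = redEps k x) ∧
        ∀ s ∈ N, ∀ x, r (P (g⁻¹ * s * g) (r⁻¹ x)) = χ (P' s (χ⁻¹ x))) ∧
    -- restricting lifts corresponds to restricting cocycles
    (∀ (γ : G → Derivation k (PowerSeries k) (PowerSeries k))
       (P : G → (PowerSeries (DualNumber k) ≃ₐ[DualNumber k] PowerSeries (DualNumber k))),
      (∀ (g : G) (x₀ x₁ : PowerSeries k),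
        P g (inclEps k x₀ + epsC k * inclEps k x₁) =
          inclEps k (ρ g x₀) + epsC k * inclEps k (ρ g x₁ + γ g (ρ g x₀))) →
      IsTwistLiftOn N ρ γ P) :=
  statement5_general k G ρ N hN
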